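/- arXiv:1801.09481 — 2 statements merged into one kernel-verified Lean document; each statement's English description precedes it below -/
import Mathlib

section
/- Let C be a binary linear code of length N and Ω the set of erasure patterns covering at least one nonzero codeword. If ω lies in the boundary ∂Ω, i.e., ω ∈ Ω and there exists ω' ∉ Ω with d_H(ω,ω') = 1, then ω covers exactly one nonzero codeword of C. -/
open scoped Classical
open Finset

noncomputable section

/-- Erasure patterns and codewords: vectors in 𝔽₂^N. -/
abbrev Pattern (N : ℕ) := Fin N → ZMod 2

/-- Hamming weight. -/
def wH {N : ℕ} (x : Pattern N) : ℕ := hammingNorm x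

/-- `ω` covers `x` if the support of `x` is contained in the support of `ω`. -/
def covers {N : ℕ} (ω x : Pattern N) : Prop := ∀ i, x i ≠ 0 → ω i ≠ 0

/-- Erasure patterns covering at least one nonzero codeword. -/
def errBEC {N : ℕ} (C : Submodule (ZMod 2) (Pattern N)) : Finset (Pattern N) :=
  univ.filter (fun ω => ∃ x ∈ C, x ≠ 0 ∧ covers ω x)

/-- The boundary ∂Ω: elements of Ω having a Hamming-distance-1 neighbour outside Ω. -/
def bdry {N : ℕ} (C : Submodule (ZMod 2) (Pattern N)) : Finset (Pattern N) :=
  (errBEC C).filter (fun ω => ∃ ω', ω' ∉ errBEC C ∧ hammingDist ω ω' = 1)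

/-
If `ω` has a neighbour `ω'` outside Ω, differing from it in coordinate `i`, then every nonzero
codeword covered by `ω` must be nonzero at `i` (otherwise `ω'` would cover it too). Two distinct
such codewords would add up to a nonzero codeword covered by `ω` that vanishes at `i`.
-/

lemma ZMod.two_eq_of_ne_zero {a b : ZMod 2} (ha : a ≠ 0) (hb : b ≠ 0) : a = b := by
  revert a b
  decide

lemma exists_forall_ne_eq_of_hammingDist_eq_one {ι : Type*} [Fintype ι] {β : ι → Type*}
    [∀ i, DecidableEq (β i)] {x y : ∀ i, β i} (h : hammingDist x y = 1) :
    ∃ i, ∀ j ≠ i, x j = y j := by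
  obtain ⟨i, hi⟩ := Finset.card_eq_one.mp h
  refine ⟨i, fun j hj => not_not.mp fun hne => hj ?_⟩
  have hj_mem : j ∈ univ.filter (fun k => x k ≠ y k) := by simpa using hne
  rwa [hi, mem_singleton] at hj_mem

section

variable {N : ℕ} {C : Submodule (ZMod 2) (Pattern N)} {ω : Pattern N}

lemma covers_add {x y : Pattern N} (hx : covers ω x) (hy : covers ω y) :
    covers ω (x + y) := by
  intro j hj
  by_cases hxj : x j = 0
  · exact hy j (by simpa [hxj] using hj)
  · exact hx j hxj

lemma covers_of_eq_of_ne {ω' x : Pattern N} {i : Fin N} (hωω' : ∀ j ≠ i, ω j = ω' j)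
    (hx : covers ω x) (hxi : x i = 0) : covers ω' x := by
  intro j hj
  rw [← hωω' j (ne_of_apply_ne x (hj.trans_eq hxi.symm))]
  exact hx j hj

lemma mem_errBEC : ω ∈ errBEC C ↔ ∃ x ∈ C, x ≠ 0 ∧ covers ω x := by
  simp [errBEC]

lemma exists_apply_ne_zero_of_mem_bdry (hω : ω ∈ bdry C) :
    ∃ i, ∀ x ∈ C, x ≠ 0 → covers ω x → x i ≠ 0 := by
  obtain ⟨-, ω', hω', hdist⟩ := mem_filter.mp hω
  obtain ⟨i, hωω'⟩ := exists_forall_ne_eq_of_hammingDist_eq_one hdist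
  exact ⟨i, fun x hxC hx0 hx hxi =>
    hω' (mem_errBEC.mpr ⟨x, hxC, hx0, covers_of_eq_of_ne hωω' hx hxi⟩)⟩

lemma eq_of_covers_of_forall_apply_ne_zero {i : Fin N}
    (hi : ∀ x ∈ C, x ≠ 0 → covers ω x → x i ≠ 0) {x y : Pattern N}
    (hxC : x ∈ C) (hx0 : x ≠ 0) (hx : covers ω x)
    (hyC : y ∈ C) (hy0 : y ≠ 0) (hy : covers ω y) :
    x = y := by
  by_contra hxy
  have hsum : x + y ≠ 0 := by rwa [← ZModModule.sub_eq_add, sub_ne_zero]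
  apply hi (x + y) (C.add_mem hxC hyC) hsum (covers_add hx hy)
  rw [Pi.add_apply, ZMod.two_eq_of_ne_zero (hi x hxC hx0 hx) (hi y hyC hy0 hy)]
  exact ZModModule.add_self _

end

theorem boundary_covers_unique_codeword (N : ℕ) (C : Submodule (ZMod 2) (Pattern N))
    (ω : Pattern N) (hω : ω ∈ bdry C) :
    ∃! x : Pattern N, x ∈ C ∧ x ≠ 0 ∧ covers ω x := by
  obtain ⟨x, hxC, hx0, hx⟩ := mem_errBEC.mp (mem_filter.mp hω).1
  obtain ⟨i, hi⟩ := exists_apply_ne_zero_of_mem_bdry hω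
  exact ⟨x, ⟨hxC, hx0, hx⟩, fun y ⟨hyC, hy0, hy⟩ =>
    eq_of_covers_of_forall_apply_ne_zero hi hyC hy0 hy hxC hx0 hx⟩

end
end

section
/- Let C be a binary linear code of length N and Ω the set of erasure patterns covering at least one nonzero codeword. For every integer 1 ≤ W ≤ N, define Γ_W = {ω ∈ ∂Ω : w_H(x(ω)) ≥ W}. Then for every 0 < ε < 1: ∑_{ω ∈ ∂Ω \ Γ_W} √(h_Ω(ω))·μ_ε(ω) ≤ ∑_{w=1}^{W} √w·A(w)·ε^w ≤ √W·A(W,ε). -/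
open scoped Classical
open Finset

noncomputable section

/-- h_Ω(ω): number of Hamming-distance-1 neighbours of ω outside Ω (zero for ω ∉ Ω). -/
def hOm {N : ℕ} (C : Submodule (ZMod 2) (Pattern N)) (ω : Pattern N) : ℕ :=
  if ω ∈ errBEC C then
    (univ.filter (fun ω' : Pattern N => ω' ∉ errBEC C ∧ hammingDist ω ω' = 1)).card
  else 0

/-- Weight distribution A(w) of the code. -/
def Aw {N : ℕ} (C : Submodule (ZMod 2) (Pattern N)) (w : ℕ) : ℕ :=
  (univ.filter (fun x : Pattern N => x ∈ C ∧ wH x = w)).card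

/-- A(W, z) = ∑_{w=1}^W A(w) z^w. -/
def AW {N : ℕ} (C : Submodule (ZMod 2) (Pattern N)) (W : ℕ) (z : ℝ) : ℝ :=
  ∑ w ∈ Finset.Icc 1 W, (Aw C w : ℝ) * z ^ w

/-- Γ_W: boundary points whose (unique) covered nonzero codeword has weight at least W. -/
def GammaW {N : ℕ} (C : Submodule (ZMod 2) (Pattern N)) (W : ℕ) : Finset (Pattern N) :=
  (bdry C).filter (fun ω => ∃ x ∈ C, x ≠ 0 ∧ covers ω x ∧ W ≤ wH x)

/-!
Every `ω ∈ ∂Ω \ Γ_W` covers a nonzero codeword `x` of weight `< W`, and `h_Ω(ω) ≤ w_H(x)`: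
a neighbour of `ω` outside `Ω` arises by flipping one coordinate, which must lie in `supp x`.
Bounding `√h_Ω(ω)` by the sum of `√w_H(x)` over all light codewords covered by `ω` and exchanging
the sums, each codeword contributes `√w_H(x) · μ_ε{ω covers x} = √w_H(x) · ε^{w_H(x)}`.
Grouping codewords by weight gives the middle expression, and `√w ≤ √W` the last one.
-/

lemma ZMod.sum_univ_two {M : Type*} [AddCommMonoid M] (f : ZMod 2 → M) : ∑ a, f a = f 0 + f 1 :=
  Fin.sum_univ_two f

lemma exists_eq_add_single_of_hammingDist_eq_one {ι : Type*} [Fintype ι] [DecidableEq ι]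
    {u v : ι → ZMod 2} (h : hammingDist u v = 1) : ∃ i, v = u + Pi.single i 1 := by
  obtain ⟨i, hi⟩ := card_eq_one.1 h
  refine ⟨i, funext fun j => ?_⟩
  have hj : u j ≠ v j ↔ j = i := by simpa using congrArg (j ∈ ·) hi
  by_cases hji : j = i
  · subst hji
    have hflip : ∀ a b : ZMod 2, a ≠ b → b = a + 1 := by decide
    simpa using hflip _ _ (hj.2 rfl)
  · simpa [hji] using (not_not.1 (mt hj.1 hji)).symm

section Erasure

variable {N : ℕ}

/-- The product Bernoulli measure `μ_ε` of a single erasure pattern. -/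
def erasureWeight {R : Type*} [CommRing R] (ε : R) (ω : Pattern N) : R :=
  ε ^ wH ω * (1 - ε) ^ (N - wH ω)

lemma erasureWeight_nonneg {R : Type*} [CommRing R] [PartialOrder R] [IsOrderedRing R]
    {ε : R} (h₀ : 0 ≤ ε) (h₁ : ε ≤ 1) (ω : Pattern N) : 0 ≤ erasureWeight ε ω :=
  mul_nonneg (pow_nonneg h₀ _) (pow_nonneg (sub_nonneg.2 h₁) _)

lemma erasureWeight_eq_prod {R : Type*} [CommRing R] (ε : R) (ω : Pattern N) :
    erasureWeight ε ω = ∏ i, if ω i ≠ 0 then ε else 1 - ε := by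
  have hcard := card_filter_add_card_filter_not (s := univ) (fun i => ω i ≠ 0)
  rw [card_univ, Fintype.card_fin] at hcard
  have hzeros : N - wH ω = #{i | ¬ω i ≠ 0} := by rw [wH, hammingNorm]; omega
  rw [prod_ite, prod_const, prod_const, erasureWeight, hzeros]
  rfl

/-- Covering `x` is a coordinatewise condition, so the sum factors over the coordinates. -/
lemma sum_erasureWeight_covers {R : Type*} [CommRing R] (ε : R) (x : Pattern N) :
    ∑ ω with covers ω x, erasureWeight ε ω = ε ^ wH x := by
  have hcovers : univ.filter (covers · x) =
      Fintype.piFinset (fun i => if x i ≠ 0 then univ.filter (· ≠ 0) else univ) := by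
    ext ω
    simp only [mem_filter, mem_univ, true_and, Fintype.mem_piFinset]
    refine forall_congr' fun i => ?_
    split_ifs with hi <;> simp [hi]
  have hfactor : ∀ i, ∑ a ∈ (if x i ≠ 0 then univ.filter (· ≠ 0) else univ),
      (if (a : ZMod 2) ≠ 0 then ε else 1 - ε) = if x i ≠ 0 then ε else 1 := by
    intro i
    split_ifs <;> simp [sum_filter, ZMod.sum_univ_two]
  simp_rw [hcovers, erasureWeight_eq_prod]
  rw [← prod_univ_sum _ fun _ a => if a ≠ 0 then ε else 1 - ε]
  simp_rw [hfactor]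
  rw [prod_ite, prod_const, prod_const, one_pow, mul_one]
  rfl

lemma covers_add_single {ω x : Pattern N} (hc : covers ω x) {i : Fin N} (hi : x i = 0) :
    covers (ω + Pi.single i 1) x := by
  intro j hj
  have hji : j ≠ i := by rintro rfl; exact hj hi
  simpa [hji] using hc j hj

end Erasure

section Boundary

variable {N : ℕ} (C : Submodule (ZMod 2) (Pattern N))

/-- Flipping a coordinate outside `supp x` keeps `x` covered, so every neighbour of `ω` outside
`Ω` is obtained by flipping a coordinate of `supp x`. -/
lemma hOm_le_wH {ω x : Pattern N} (hx : x ∈ C) (hx0 : x ≠ 0) (hc : covers ω x) :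
    hOm C ω ≤ wH x := by
  rw [hOm]
  split_ifs
  · calc _ ≤ #((univ.filter (x · ≠ 0)).image (fun i => ω + Pi.single i 1)) := by
          refine card_le_card fun ω' hω' => ?_
          obtain ⟨hout, hdist⟩ := (mem_filter.1 hω').2
          obtain ⟨i, rfl⟩ := exists_eq_add_single_of_hammingDist_eq_one hdist
          refine mem_image_of_mem _ (mem_filter.2 ⟨mem_univ i, fun hi => hout ?_⟩)
          exact mem_filter.2 ⟨mem_univ _, x, hx, hx0, covers_add_single hc hi⟩
      _ ≤ wH x := card_image_le
  · exact Nat.zero_le _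

def lightCodewords (W : ℕ) : Finset (Pattern N) :=
  univ.filter (fun x => x ∈ C ∧ wH x ∈ Icc 1 W)

lemma sum_lightCodewords_eq {R : Type*} [Semiring R] (W : ℕ) (f : ℕ → R) :
    ∑ x ∈ lightCodewords C W, f (wH x) = ∑ w ∈ Icc 1 W, (Aw C w : R) * f w := by
  rw [← sum_fiberwise_of_maps_to (g := wH) fun x hx => (mem_filter.1 hx).2.2]
  refine sum_congr rfl fun w hw => ?_
  have hfiber : (lightCodewords C W).filter (wH · = w) =
      univ.filter (fun x => x ∈ C ∧ wH x = w) := by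
    ext x
    simp only [lightCodewords, mem_filter, mem_univ, true_and]
    constructor
    · rintro ⟨⟨hx, -⟩, rfl⟩; exact ⟨hx, rfl⟩
    · rintro ⟨hx, rfl⟩; exact ⟨⟨hx, hw⟩, rfl⟩
  rw [sum_congr rfl fun x hx => by rw [(mem_filter.1 hx).2], hfiber, sum_const, Aw, nsmul_eq_mul]

lemma exists_light_codeword_of_mem_bdry_sdiff_GammaW {W : ℕ} {ω : Pattern N}
    (hω : ω ∈ bdry C \ GammaW C W) : ∃ x ∈ lightCodewords C W, covers ω x ∧ x ≠ 0 := by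
  obtain ⟨hbdry, hΓ⟩ := mem_sdiff.1 hω
  obtain ⟨x, hx, hx0, hc⟩ := (mem_filter.1 (mem_filter.1 hbdry).1).2
  have hxW : wH x < W := not_le.1 fun h => hΓ (mem_filter.2 ⟨hbdry, x, hx, hx0, hc, h⟩)
  have hx1 : 1 ≤ wH x := hammingNorm_pos_iff.2 hx0
  exact ⟨x, mem_filter.2 ⟨mem_univ x, hx, mem_Icc.2 ⟨hx1, hxW.le⟩⟩, hc, hx0⟩

lemma sqrt_hOm_le_sum_sqrt_wH {W : ℕ} {ω : Pattern N} (hω : ω ∈ bdry C \ GammaW C W) :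
    √(hOm C ω : ℝ) ≤ ∑ x ∈ lightCodewords C W with covers ω x, √(wH x : ℝ) := by
  obtain ⟨x, hxL, hc, hx0⟩ := exists_light_codeword_of_mem_bdry_sdiff_GammaW C hω
  calc √(hOm C ω : ℝ) ≤ √(wH x : ℝ) :=
        Real.sqrt_le_sqrt (by exact_mod_cast hOm_le_wH C (mem_filter.1 hxL).2.1 hx0 hc)
    _ ≤ _ := single_le_sum (f := fun x => √(wH x : ℝ)) (fun _ _ => Real.sqrt_nonneg _)
        ((mem_filter (s := lightCodewords C W)).2 ⟨hxL, hc⟩)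

/-- A union bound over the light codewords covered by each boundary pattern. -/
lemma sum_sqrt_hOm_mul_erasureWeight_le {W : ℕ} {ε : ℝ} (h₀ : 0 ≤ ε) (h₁ : ε ≤ 1) :
    ∑ ω ∈ bdry C \ GammaW C W, √(hOm C ω : ℝ) * erasureWeight ε ω
      ≤ ∑ x ∈ lightCodewords C W, √(wH x : ℝ) * ε ^ wH x := by
  have hμ := erasureWeight_nonneg h₀ h₁ (N := N)
  calc _ ≤ ∑ ω ∈ bdry C \ GammaW C W, ∑ x ∈ lightCodewords C W with covers ω x,
          √(wH x : ℝ) * erasureWeight ε ω := by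
        gcongr with ω hω
        rw [← sum_mul]
        exact mul_le_mul_of_nonneg_right (sqrt_hOm_le_sum_sqrt_wH C hω) (hμ ω)
    _ ≤ ∑ ω, ∑ x ∈ lightCodewords C W with covers ω x, √(wH x : ℝ) * erasureWeight ε ω :=
        sum_le_sum_of_subset_of_nonneg (subset_univ _) fun ω _ _ =>
          sum_nonneg fun x _ => mul_nonneg (Real.sqrt_nonneg _) (hμ ω)
    _ = ∑ x ∈ lightCodewords C W, ∑ ω with covers ω x, √(wH x : ℝ) * erasureWeight ε ω :=
        sum_comm' fun ω x => by simp only [mem_filter, mem_univ, true_and, and_comm]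
    _ = _ := by simp_rw [← mul_sum, sum_erasureWeight_covers]

end Boundary

theorem small_weight_boundary_bound_general (N : ℕ) (C : Submodule (ZMod 2) (Pattern N))
    (W : ℕ) (ε : ℝ) (hε : 0 < ε) (hε1 : ε < 1) :
    (∑ ω ∈ bdry C \ GammaW C W,
        Real.sqrt (hOm C ω) * (ε ^ wH ω * (1 - ε) ^ (N - wH ω)))
      ≤ ∑ w ∈ Finset.Icc 1 W, Real.sqrt w * (Aw C w : ℝ) * ε ^ w ∧
    (∑ w ∈ Finset.Icc 1 W, Real.sqrt w * (Aw C w : ℝ) * ε ^ w)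
      ≤ Real.sqrt W * AW C W ε := by
  constructor
  · calc _ ≤ ∑ x ∈ lightCodewords C W, √(wH x : ℝ) * ε ^ wH x :=
          sum_sqrt_hOm_mul_erasureWeight_le C hε.le hε1.le
      _ = _ := by
          rw [sum_lightCodewords_eq C W (fun w => √(w : ℝ) * ε ^ w)]
          exact sum_congr rfl fun w _ => by ring
  · rw [AW, mul_sum]
    refine sum_le_sum fun w hw => ?_
    rw [mul_assoc]
    have hAw : 0 ≤ (Aw C w : ℝ) * ε ^ w := by positivity
    exact mul_le_mul_of_nonneg_right
      (Real.sqrt_le_sqrt (by exact_mod_cast (mem_Icc.1 hw).2)) hAw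

theorem small_weight_boundary_bound (N : ℕ) (C : Submodule (ZMod 2) (Pattern N))
    (W : ℕ) (hW1 : 1 ≤ W) (hWN : W ≤ N) (ε : ℝ) (hε : 0 < ε) (hε1 : ε < 1) :
    (∑ ω ∈ bdry C \ GammaW C W,
        Real.sqrt (hOm C ω) * (ε ^ wH ω * (1 - ε) ^ (N - wH ω)))
      ≤ ∑ w ∈ Finset.Icc 1 W, Real.sqrt w * (Aw C w : ℝ) * ε ^ w ∧
    (∑ w ∈ Finset.Icc 1 W, Real.sqrt w * (Aw C w : ℝ) * ε ^ w)
      ≤ Real.sqrt W * AW C W ε :=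
  small_weight_boundary_bound_general N C W ε hε hε1
end
end
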